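/- Under the assumptions of the previous lemma, for any u with |u - u0| ≤ δ/n^{1/4} ≤ min(1,q)/(2r), the fifth derivative of F satisfies |F^{(5)}(u)|/5! ≤ (64/5)(q + 1/q)^5. -/

import Mathlib

/-!
Because `deriv Real.log = Inv.inv` on all of `ℝ`, the `k`-th derivatives of `log (α - u)` and
`log (u - β)` are `-(k-1)! / (α - u)^k` and `(-1)^(k-1) (k-1)! / (u - β)^k`, while the quadratic
part of `F` dies after two derivatives. As the weights `p, 1 - p` are convex, `|F⁽⁵⁾ u| ≤ 4! / d⁵`
whenever `u` lies at distance at least `d` from both `α` and `β`. The window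
`|u - u₀| ≤ min 1 q / (2 r)` gives this with `d = min 1 q / (2 r)`, and
`r ≤ min 1 q * (q + 1/q)` turns `1 / d` into at most `2 (q + 1/q)`.
-/

open Real Nat

theorem Real.iteratedDeriv_succ_log (n : ℕ) (x : ℝ) :
    iteratedDeriv (n + 1) log x = (-1) ^ n * n ! * x ^ (-1 - n : ℤ) := by
  rw [iteratedDeriv_eq_iterate, Function.iterate_succ_apply, deriv_log', iter_deriv_inv]

theorem iteratedDeriv_succ_log_const_sub (n : ℕ) (a x : ℝ) :
    iteratedDeriv (n + 1) (fun y => log (a - y)) x = -(n ! * (a - x) ^ (-1 - n : ℤ)) := by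
  simp only [iteratedDeriv_comp_const_sub, Real.iteratedDeriv_succ_log, smul_eq_mul]
  have : ((-1 : ℝ) ^ n) ^ 2 = 1 := by rw [← pow_mul, mul_comm, pow_mul, neg_one_sq, one_pow]
  linear_combination (-(n ! * (a - x) ^ (-1 - n : ℤ))) * this

theorem iteratedDeriv_succ_log_sub_const (n : ℕ) (b x : ℝ) :
    iteratedDeriv (n + 1) (fun y => log (y - b)) x = (-1) ^ n * n ! * (x - b) ^ (-1 - n : ℤ) := by
  simp only [iteratedDeriv_comp_sub_const, Real.iteratedDeriv_succ_log]

theorem iteratedDeriv_add_three_quadratic_add_logs (n : ℕ) {a b c p x : ℝ}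
    (ha : a - x ≠ 0) (hb : x - b ≠ 0) :
    iteratedDeriv (n + 3)
        (fun u => u ^ 2 / 2 - u * c + p * log (a - u) + (1 - p) * log (u - b)) x =
      (n + 2)! * ((-1) ^ n * (1 - p) / (x - b) ^ (n + 3) - p / (a - x) ^ (n + 3)) := by
  have hlog_a : ContDiffAt ℝ (n + 3 : ℕ) (fun u => log (a - u)) x := by
    fun_prop (disch := assumption)
  have hlog_b : ContDiffAt ℝ (n + 3 : ℕ) (fun u => log (u - b)) x := by
    fun_prop (disch := assumption)
  have hquad : descFactorial 2 (n + 3) = 0 := descFactorial_eq_zero_iff_lt.2 (by omega)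
  rw [iteratedDeriv_fun_add (by fun_prop) (contDiffAt_const.mul hlog_b),
    iteratedDeriv_fun_add (by fun_prop) (contDiffAt_const.mul hlog_a),
    iteratedDeriv_fun_sub (by fun_prop) (by fun_prop)]
  simp only [iteratedDeriv_const_mul_field, iteratedDeriv_div_const,
    iteratedDeriv_mul_const_field, iteratedDeriv_pow, iteratedDeriv_fun_id, hquad,
    if_neg (by omega : n + 3 ≠ 0), if_neg (by omega : n + 3 ≠ 1),
    iteratedDeriv_succ_log_const_sub, iteratedDeriv_succ_log_sub_const]
  have hexp : (-1 - (n + 2 : ℕ) : ℤ) = -(n + 3 : ℕ) := by omega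
  rw [hexp, zpow_neg, zpow_neg, zpow_natCast, zpow_natCast]
  ring

theorem abs_iteratedDeriv_add_three_quadratic_add_logs_le (n : ℕ) {a b c p x d : ℝ}
    (hp₀ : 0 ≤ p) (hp₁ : p ≤ 1) (hd : 0 < d) (ha : d ≤ a - x) (hb : d ≤ x - b) :
    |iteratedDeriv (n + 3)
        (fun u => u ^ 2 / 2 - u * c + p * log (a - u) + (1 - p) * log (u - b)) x| ≤
      (n + 2)! / d ^ (n + 3) := by
  have hinv_a : 1 / (a - x) ^ (n + 3) ≤ 1 / d ^ (n + 3) :=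
    one_div_le_one_div_of_le (by positivity) (pow_le_pow_left₀ hd.le ha _)
  have hinv_b : 1 / (x - b) ^ (n + 3) ≤ 1 / d ^ (n + 3) :=
    one_div_le_one_div_of_le (by positivity) (pow_le_pow_left₀ hd.le hb _)
  have hpos_a : 0 < a - x := hd.trans_le ha
  have hpos_b : 0 < x - b := hd.trans_le hb
  rw [iteratedDeriv_add_three_quadratic_add_logs n hpos_a.ne' hpos_b.ne', abs_mul,
    Nat.abs_cast, div_eq_mul_one_div ((n + 2)! : ℝ)]
  gcongr
  calc |(-1) ^ n * (1 - p) / (x - b) ^ (n + 3) - p / (a - x) ^ (n + 3)|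
      ≤ (1 - p) * (1 / (x - b) ^ (n + 3)) + p * (1 / (a - x) ^ (n + 3)) := by
        refine (abs_sub _ _).trans_eq ?_
        simp only [abs_div, abs_mul, abs_pow, abs_neg, abs_one, one_pow, one_mul,
          abs_of_nonneg hp₀, abs_of_nonneg (sub_nonneg.2 hp₁), abs_of_pos hpos_a,
          abs_of_pos hpos_b]
        ring
    _ ≤ (1 - p) * (1 / d ^ (n + 3)) + p * (1 / d ^ (n + 3)) := by gcongr
    _ = 1 / d ^ (n + 3) := by ring

theorem sqrt_sq_sub_add_one_le_min_mul {q : ℝ} (hq : 0 < q) :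
    √(q ^ 2 - q + 1) ≤ min 1 q * (q + 1 / q) := by
  rw [sqrt_le_iff]
  refine ⟨by positivity, ?_⟩
  rcases le_total 1 q with h | h
  · have hq₁ : q * (1 / q) = 1 := mul_one_div_cancel hq.ne'
    rw [min_eq_left h, one_mul]
    nlinarith [sq_nonneg (1 / q)]
  · rw [min_eq_right h, mul_add, mul_one_div_cancel hq.ne']
    nlinarith [sq_nonneg q, mul_pos hq hq]

theorem le_sub_endpoints_of_abs_sub_le {q r u u₀ : ℝ} (hr : 0 < r)
    (hu : |u - u₀| ≤ min 1 q / (2 * r)) :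
    min 1 q / (2 * r) ≤ u₀ + 1 / r - u ∧ min 1 q / (2 * r) ≤ u - (u₀ - q / r) := by
  have h₁ : 2 * (min 1 q / (2 * r)) ≤ 1 / r := by
    rw [← mul_div_assoc, mul_div_mul_left _ _ two_ne_zero]; gcongr; exact min_le_left 1 q
  have h₂ : 2 * (min 1 q / (2 * r)) ≤ q / r := by
    rw [← mul_div_assoc, mul_div_mul_left _ _ two_ne_zero]; gcongr; exact min_le_right 1 q
  have := abs_le.1 hu
  constructor <;> linarith

theorem fifth_derivative_bound_general (q : ℝ) (hq : 0 < q)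
    (r : ℝ) (hr : r = Real.sqrt (q^2 - q + 1))
    (p : ℝ) (hp : p = 1 / (1 + q^3))
    (u0 : ℝ)
    (α β z0 : ℝ) (hα : α = u0 + 1 / r) (hβ : β = u0 - q / r)
    (F : ℝ → ℝ)
    (hF : F = fun u => u^2 / 2 - u * z0 + p * Real.log (α - u)
      + (1 - p) * Real.log (u - β))
    (δ n : ℝ)
    (hsmall : δ / n ^ ((1:ℝ)/4) ≤ min 1 q / (2 * r))
    (u : ℝ) (hu : |u - u0| ≤ δ / n ^ ((1:ℝ)/4)) :
    |iteratedDeriv 5 F u| / (Nat.factorial 5) ≤ (64/5) * (q + 1/q)^5 := by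
  have hr₀ : 0 < r := hr ▸ sqrt_pos.2 (by nlinarith)
  have hp₀ : 0 ≤ p := hp ▸ by positivity
  have hp₁ : p ≤ 1 := hp ▸ div_le_one_of_le₀ (by nlinarith [pow_pos hq 3]) (by positivity)
  set d := min 1 q / (2 * r)
  have hd : 1 / (2 * (q + 1 / q)) ≤ d := by
    rw [div_le_div_iff₀ (by positivity) (by positivity), one_mul]
    linarith [hr ▸ sqrt_sq_sub_add_one_le_min_mul hq]
  have hd₀ : 0 < d := lt_of_lt_of_le (by positivity) hd
  obtain ⟨hdα, hdβ⟩ := le_sub_endpoints_of_abs_sub_le hr₀ (hu.trans hsmall)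
  have hderiv := abs_iteratedDeriv_add_three_quadratic_add_logs_le 2 (c := z0) hp₀ hp₁ hd₀
    (hα ▸ hdα) (hβ ▸ hdβ)
  have hd₅ : 1 / d ^ 5 ≤ (2 * (q + 1 / q)) ^ 5 := by
    rw [← one_div_pow]
    exact pow_le_pow_left₀ (by positivity) ((one_div_le (by positivity) hd₀).1 hd) 5
  rw [hF]
  calc |iteratedDeriv 5 _ u| / (5 ! : ℕ) ≤ (4 ! : ℝ) / d ^ 5 / (5 ! : ℕ) := by gcongr
    _ = 1 / d ^ 5 / 5 := by norm_num [Nat.factorial]; ring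
    _ ≤ (2 * (q + 1 / q)) ^ 5 / 5 := by gcongr
    _ ≤ 64 / 5 * (q + 1 / q) ^ 5 := by
        have : 0 < q + 1 / q := by positivity
        nlinarith [pow_pos this 5]

theorem fifth_derivative_bound (q : ℝ) (hq : 0 < q)
    (r : ℝ) (hr : r = Real.sqrt (q^2 - q + 1))
    (p : ℝ) (hp : p = 1 / (1 + q^3))
    (u0 : ℝ)
    (α β z0 : ℝ) (hα : α = u0 + 1 / r) (hβ : β = u0 - q / r)
    (hz0 : z0 = u0 + (q - 1) / r)
    (F : ℝ → ℝ)
    (hF : F = fun u => u^2 / 2 - u * z0 + p * Real.log (α - u)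
      + (1 - p) * Real.log (u - β))
    (δ n : ℝ) (hδ : 0 < δ) (hn : 1 ≤ n)
    (hsmall : δ / n ^ ((1:ℝ)/4) ≤ min 1 q / (2 * r))
    (u : ℝ) (hu : |u - u0| ≤ δ / n ^ ((1:ℝ)/4)) :
    |iteratedDeriv 5 F u| / (Nat.factorial 5) ≤ (64/5) * (q + 1/q)^5 :=
  fifth_derivative_bound_general q hq r hr p hp u0 α β z0 hα hβ F hF δ n hsmall u hu
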